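/- arXiv:1706.10138 — 5 statements merged into one kernel-verified Lean document; each statement's English description precedes it below -/
import Mathlib

section
/- Let G be a group and let X be a nonempty subset of G. Then the real-valued indicator function 𝟙_X satisfies the group-like identity 𝟙_X(s·t)·𝟙_X(t) = 𝟙_X(s)·𝟙_X(t) for all s, t ∈ G if and only if X is the carrier of a subgroup of G (i.e., X contains the identity and is closed under multiplication and inverses). -/
/-- For a nonempty subset `X` of a group `G`, the real-valued indicator function `𝟙_X`
satisfies the group-like identity `𝟙_X(s·t)·𝟙_X(t) = 𝟙_X(s)·𝟙_X(t)` for all `s, t ∈ G`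
if and only if `X` is the carrier of a subgroup of `G`. -/
theorem grouplike_indicator_iff_subgroup {G : Type*} [Group G] (X : Set G)
    (hX : X.Nonempty) :
    (∀ s t : G,
        X.indicator (1 : G → ℝ) (s * t) * X.indicator (1 : G → ℝ) t =
          X.indicator (1 : G → ℝ) s * X.indicator (1 : G → ℝ) t) ↔
      ∃ H : Subgroup G, X = (H : Set G) := by
  constructor
  · intro h
    obtain ⟨t0, ht0⟩ := hX
    have key : ∀ s t : G, t ∈ X → (s * t ∈ X ↔ s ∈ X) := by
      intro s t ht
      have := h s t
      simp only [Set.indicator_apply, Set.indicator_of_mem ht, Pi.one_apply, mul_one] at this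
      constructor
      · intro hst
        by_contra hs
        simp [hst, hs] at this
      · intro hs
        by_contra hst
        simp [hst, hs] at this
    have one_mem : (1 : G) ∈ X := by
      have := key 1 t0 ht0
      rw [one_mul] at this
      exact this.mp ht0
    have inv_mem : ∀ t, t ∈ X → t⁻¹ ∈ X := by
      intro t ht
      have := key t⁻¹ t ht
      rw [inv_mul_cancel] at this
      exact this.mp one_mem
    refine ⟨{ carrier := X,
              mul_mem' := fun {a b} ha hb => (key a b hb).mpr ha,
              one_mem' := one_mem,
              inv_mem' := fun {a} ha => inv_mem a ha }, rfl⟩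
  · rintro ⟨H, rfl⟩ s t
    by_cases ht : t ∈ H
    · by_cases hs : s ∈ H
      · have : s * t ∈ H := H.mul_mem hs ht
        simp [Set.indicator_of_mem, ht, hs, this]
      · have : s * t ∉ H := fun h => hs (by simpa using H.mul_mem h (H.inv_mem ht))
        simp [ht, hs, this]
    · simp [ht]
end

section
/- Let G be a locally compact Hausdorff topological group with Borel σ-algebra, and let μ be an inner regular (Radon) Borel probability measure on G satisfying μ ∗ μ = μ, where ∗ denotes convolution of measures. Then there exist a subgroup H of G whose carrier is compact and a left-translation-invariant Borel probability measure ν on H (with the subspace topology) such that μ is the pushforward of ν under the inclusion map H → G. -/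
open MeasureTheory
open scoped MeasureTheory ENNReal

section KelleyAux

variable {G : Type*} [Group G] [TopologicalSpace G] [IsTopologicalGroup G]
  [MeasurableSpace G] [BorelSpace G]

/-- If `μ ∗ₘ μ = μ ≠ 0`, the multiplication map is a.e. measurable for `μ.prod μ`
(otherwise the convolution would be the zero measure). -/
lemma kelley_aux_aemeas (μ : Measure G) [IsProbabilityMeasure μ] (hμ : μ ∗ₘ μ = μ) :
    AEMeasurable (fun p : G × G => p.1 * p.2) (μ.prod μ) := by
  by_contra h
  rw [Measure.mconv, Measure.map_of_not_aemeasurable h] at hμ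
  have : μ Set.univ = 1 := measure_univ
  rw [← hμ] at this
  simp at this

/-- The slice (disintegration) formula obtained from idempotence of `μ`. -/
lemma kelley_aux_slice (μ : Measure G) [IsProbabilityMeasure μ] (hμ : μ ∗ₘ μ = μ)
    {B : Set G} (hB : MeasurableSet B) :
    μ B = ∫⁻ s, μ ((fun t => s * t) ⁻¹' B) ∂μ := by
  have hAE := kelley_aux_aemeas μ hμ
  set g := hAE.mk _ with hg
  have hgmeas : Measurable g := hAE.measurable_mk
  have hgae : (fun p : G × G => p.1 * p.2) =ᵐ[μ.prod μ] g := hAE.ae_eq_mk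
  have h1 : μ B = (μ.prod μ) ((fun p : G × G => p.1 * p.2) ⁻¹' B) := by
    conv_lhs => rw [← hμ]
    exact Measure.map_apply_of_aemeasurable hAE hB
  have h2 : (μ.prod μ) ((fun p : G × G => p.1 * p.2) ⁻¹' B) = (μ.prod μ) (g ⁻¹' B) := by
    apply measure_congr
    filter_upwards [hgae] with p hp
    exact congrArg (fun z => z ∈ B) hp
  have h3 : (μ.prod μ) (g ⁻¹' B) = ∫⁻ s, μ (Prod.mk s ⁻¹' (g ⁻¹' B)) ∂μ :=
    Measure.prod_apply (hgmeas hB)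
  have h4 : ∫⁻ s, μ (Prod.mk s ⁻¹' (g ⁻¹' B)) ∂μ = ∫⁻ s, μ ((fun t => s * t) ⁻¹' B) ∂μ := by
    apply lintegral_congr_ae
    filter_upwards [Measure.ae_ae_of_ae_prod hgae] with s hs
    apply measure_congr
    filter_upwards [hs] with t ht
    exact congrArg (fun z => z ∈ B) ht.symm
  rw [h1, h2, h3, h4]

/-- The functional equation for `x ↦ μ ((x * ·) ⁻¹' K)`. -/
lemma kelley_aux_feq (μ : Measure G) [IsProbabilityMeasure μ] (hμ : μ ∗ₘ μ = μ)
    {K : Set G} (hK : IsClosed K) (x : G) :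
    μ ((fun t => x * t) ⁻¹' K) = ∫⁻ s, μ ((fun t => (x * s) * t) ⁻¹' K) ∂μ := by
  have hBmeas : MeasurableSet ((fun t => x * t) ⁻¹' K) :=
    (hK.preimage (continuous_mul_left x)).measurableSet
  rw [kelley_aux_slice μ hμ hBmeas]
  apply lintegral_congr
  intro s
  congr 1
  ext t
  simp [Set.mem_preimage, mul_assoc]

/-- Upper semicontinuity of `x ↦ μ ((x * ·) ⁻¹' K)` for `K` compact. -/
lemma kelley_aux_usc [LocallyCompactSpace G] [T2Space G] (μ : Measure G)
    [IsProbabilityMeasure μ] [μ.InnerRegular] {K : Set G} (hK : IsCompact K) (c : ℝ≥0∞) :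
    IsOpen {x : G | μ ((fun t => x * t) ⁻¹' K) < c} := by
  rw [isOpen_iff_mem_nhds]
  intro x hx
  simp only [Set.mem_setOf_eq] at hx
  have hCcpt : IsCompact ((fun t => x * t) ⁻¹' K) :=
    (Homeomorph.mulLeft x).isCompact_preimage.mpr hK
  obtain ⟨U, hKU, hUo, hUc⟩ := hCcpt.exists_isOpen_lt_of_lt (μ := μ) c hx
  obtain ⟨V, hV1, hVU⟩ := compact_open_separated_mul_left hCcpt hUo hKU
  have hcont : ContinuousAt (fun y : G => y⁻¹ * x) x := by fun_prop
  have hW : (fun y : G => y⁻¹ * x) ⁻¹' V ∈ nhds x := by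
    apply hcont.preimage_mem_nhds
    simpa using hV1
  filter_upwards [hW] with y hy
  simp only [Set.mem_preimage] at hy
  have hsub : (fun t => y * t) ⁻¹' K ⊆ U := by
    intro t ht
    simp only [Set.mem_preimage] at ht
    have : t = (y⁻¹ * x) * (x⁻¹ * (y * t)) := by group
    rw [this]
    exact hVU (Set.mul_mem_mul hy (by simp [Set.mem_preimage, ht]))
  exact lt_of_le_of_lt (measure_mono hsub) hUc

/-- An `ℝ≥0∞`-valued function with closed superlevel sets attains its maximum on a
nonempty compact set. -/
lemma kelley_aux_max [T2Space G] {f : G → ℝ≥0∞} (hf : ∀ c, IsClosed {x : G | c ≤ f x}) {C : Set G}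
    (hC : IsCompact C) (hne : C.Nonempty) : ∃ x₀ ∈ C, ∀ x ∈ C, f x ≤ f x₀ := by
  set m := ⨆ x ∈ C, f x with hm
  rcases eq_or_ne m 0 with h0 | h0
  · obtain ⟨x₀, hx₀⟩ := hne
    refine ⟨x₀, hx₀, fun x hx => ?_⟩
    have : f x ≤ m := le_biSup f hx
    simp [h0] at this
    simp [this]
  · have hmpos : 0 < m := pos_iff_ne_zero.mpr h0
    have key : (⋂ r : {r : ℝ≥0∞ // r < m}, (C ∩ {x | (r : ℝ≥0∞) ≤ f x})).Nonempty := by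
      have : Nonempty {r : ℝ≥0∞ // r < m} := ⟨⟨0, hmpos⟩⟩
      apply IsCompact.nonempty_iInter_of_directed_nonempty_isCompact_isClosed
      · intro r₁ r₂
        refine ⟨⟨max r₁ r₂, max_lt r₁.2 r₂.2⟩, ?_, ?_⟩
        · intro x hx
          exact ⟨hx.1, le_trans (le_max_left (r₁ : ℝ≥0∞) r₂) hx.2⟩
        · intro x hx
          exact ⟨hx.1, le_trans (le_max_right (r₁ : ℝ≥0∞) r₂) hx.2⟩
      · intro r
        have hr : (r : ℝ≥0∞) < ⨆ x ∈ C, f x := hm ▸ r.2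
        rw [lt_iSup_iff] at hr
        obtain ⟨x, hx⟩ := hr
        rw [lt_iSup_iff] at hx
        obtain ⟨hxC, hxr⟩ := hx
        exact ⟨x, hxC, le_of_lt hxr⟩
      · intro r
        exact hC.inter_right (hf r)
      · intro r
        exact (hC.isClosed.inter (hf r))
    obtain ⟨x₀, hx₀⟩ := key
    simp only [Set.mem_iInter, Set.mem_inter_iff, Set.mem_setOf_eq] at hx₀
    have hx₀C : x₀ ∈ C := (hx₀ ⟨0, hmpos⟩).1
    refine ⟨x₀, hx₀C, fun x hx => ?_⟩
    have hfx : f x ≤ m := le_biSup f hx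
    by_contra hcon
    push_neg at hcon
    have hfx₀m : f x₀ < m := lt_of_lt_of_le hcon hfx
    obtain ⟨r, hr1, hr2⟩ := exists_between hfx₀m
    exact absurd ((hx₀ ⟨r, hr2⟩).2) (not_le.mpr hr1)

/-- A nonempty compact set closed under multiplication in a topological group contains `1`. -/
lemma kelley_aux_one_mem [T2Space G] {S : Set G} (hcpt : IsCompact S) (hne : S.Nonempty)
    (hmul : ∀ x ∈ S, ∀ y ∈ S, x * y ∈ S) : (1 : G) ∈ S := by
  letI : Semigroup ↥S :=
    { mul := fun a b => ⟨(a : G) * b, hmul _ a.2 _ b.2⟩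
      mul_assoc := fun a b c => Subtype.ext (mul_assoc (a : G) b c) }
  haveI : CompactSpace ↥S := isCompact_iff_compactSpace.mp hcpt
  haveI : Nonempty ↥S := hne.to_subtype
  have hcontmul : ∀ r : ↥S, Continuous (· * r) := by
    intro r
    exact Continuous.subtype_mk (continuous_subtype_val.mul continuous_const) _
  obtain ⟨m, hm⟩ := exists_idempotent_of_compact_t2_of_continuous_mul_left hcontmul
  have hmm : (m : G) * m = m := congrArg Subtype.val hm
  have h1 : (m : G) = 1 := mul_eq_left.mp hmm
  exact h1 ▸ m.2

/-- The closure of a multiplicatively closed set is multiplicatively closed. -/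
lemma kelley_aux_closure_mul {R : Set G} (h : ∀ x ∈ R, ∀ y ∈ R, x * y ∈ R) :
    ∀ x ∈ closure R, ∀ y ∈ closure R, x * y ∈ closure R := by
  have step1 : ∀ x ∈ R, ∀ y ∈ closure R, x * y ∈ closure R := by
    intro x hx
    have hmt : Set.MapsTo (fun y => x * y) R (closure R) :=
      fun y hy => subset_closure (h x hx y hy)
    exact fun y hy => hmt.closure_left (continuous_mul_left x) isClosed_closure hy
  intro x hx y hy
  have hmt : Set.MapsTo (fun x => x * y) R (closure R) := fun z hz => step1 z hz y hy
  exact hmt.closure_left (continuous_mul_right y) isClosed_closure hx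

end KelleyAux

/-- Kelley's theorem: an inner regular idempotent Borel probability measure `μ` on a
locally compact Hausdorff topological group `G` is the pushforward of a
left-translation-invariant Borel probability measure on a compact subgroup of `G`. -/
theorem idempotent_probability_measure_is_haar_of_compact_subgroup {G : Type*} [Group G]
    [TopologicalSpace G] [IsTopologicalGroup G] [LocallyCompactSpace G] [T2Space G]
    [MeasurableSpace G] [BorelSpace G] (μ : Measure G) [IsProbabilityMeasure μ]
    [μ.InnerRegular] (hμ : μ ∗ₘ μ = μ) :
    ∃ (H : Subgroup G) (ν : Measure H),
      IsCompact (H : Set G) ∧ IsProbabilityMeasure ν ∧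
      (∀ h : H, Measure.map (fun x : H => h * x) ν = ν) ∧
      μ = Measure.map (Subtype.val : H → G) ν := by
  classical
  -- the topological support of μ
  set S : Set G := {x : G | ∀ U : Set G, IsOpen U → x ∈ U → 0 < μ U} with hSdef
  have hSclosed : IsClosed S := by
    rw [← isOpen_compl_iff, isOpen_iff_mem_nhds]
    intro x hx
    simp only [hSdef, Set.mem_compl_iff, Set.mem_setOf_eq, not_forall] at hx
    obtain ⟨U, hUo, hxU, hU0⟩ := hx
    have hU0' : μ U = 0 := by simpa using hU0
    refine Filter.mem_of_superset (hUo.mem_nhds hxU) ?_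
    intro y hy
    simp only [Set.mem_compl_iff, hSdef, Set.mem_setOf_eq, not_forall]
    exact ⟨U, hUo, hy, by simp [hU0']⟩
  have hSmeas : MeasurableSet S := hSclosed.measurableSet
  have hScompl : μ Sᶜ = 0 := by
    by_contra h
    have hpos : 0 < μ Sᶜ := pos_iff_ne_zero.mpr h
    obtain ⟨K, hKsub, hKcpt, hKpos⟩ := hSmeas.compl.exists_lt_isCompact hpos
    have hch : ∀ x : K, ∃ U : Set G, IsOpen U ∧ (x : G) ∈ U ∧ μ U = 0 := by
      intro x
      have hx := hKsub x.2
      simp only [hSdef, Set.mem_compl_iff, Set.mem_setOf_eq, not_forall] at hx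
      obtain ⟨U, hUo, hxU, hU0⟩ := hx
      exact ⟨U, hUo, hxU, by simpa using hU0⟩
    choose U hUo hxU hU0 using hch
    obtain ⟨t, ht⟩ := hKcpt.elim_finite_subcover U hUo
      (fun x hx => Set.mem_iUnion.mpr ⟨⟨x, hx⟩, hxU ⟨x, hx⟩⟩)
    have hle : μ K ≤ ∑ i ∈ t, μ (U i) :=
      le_trans (measure_mono ht) (measure_biUnion_finset_le t U)
    simp only [hU0, Finset.sum_const_zero] at hle
    exact absurd (lt_of_lt_of_le hKpos hle) (by simp)
  have hS1 : μ S = 1 := by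
    have h := measure_add_measure_compl (μ := μ) hSmeas
    rw [hScompl, add_zero, measure_univ] at h
    exact h
  have hSne : S.Nonempty := by
    rcases Set.eq_empty_or_nonempty S with h | h
    · rw [h] at hS1; simp at hS1
    · exact h
  have hconull : ∀ C : Set G, IsClosed C → μ Cᶜ = 0 → S ⊆ C := by
    intro C hCc hC0 x hx
    by_contra hxC
    have : 0 < μ Cᶜ := hx Cᶜ hCc.isOpen_compl hxC
    rw [hC0] at this
    exact lt_irrefl _ this
  have hSaemem : ∀ᵐ s ∂μ, s ∈ S := by
    rw [Filter.eventually_iff, mem_ae_iff]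
    exact hScompl
  -- S is closed under multiplication
  have hAE := kelley_aux_aemeas μ hμ
  have hSmul : ∀ x ∈ S, ∀ y ∈ S, x * y ∈ S := by
    intro x hx y hy U hUo hU
    have hcont : ContinuousAt (fun p : G × G => p.1 * p.2) (x, y) := continuous_mul.continuousAt
    have hpre : (fun p : G × G => p.1 * p.2) ⁻¹' U ∈ nhds (x, y) := hcont (hUo.mem_nhds hU)
    rw [nhds_prod_eq, Filter.mem_prod_iff] at hpre
    obtain ⟨V, hV, W, hW, hVW⟩ := hpre
    obtain ⟨V', hV'sub, hV'o, hxV'⟩ := mem_nhds_iff.mp hV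
    obtain ⟨W', hW'sub, hW'o, hyW'⟩ := mem_nhds_iff.mp hW
    have h1 : 0 < μ V' * μ W' := ENNReal.mul_pos (hx V' hV'o hxV').ne' (hy W' hW'o hyW').ne'
    have h2 : μ V' * μ W' = (μ.prod μ) (V' ×ˢ W') := (Measure.prod_prod V' W').symm
    have h3 : (μ.prod μ) (V' ×ˢ W') ≤ (μ.prod μ) ((fun p : G × G => p.1 * p.2) ⁻¹' U) := by
      apply measure_mono
      intro p hp
      exact hVW ⟨hV'sub hp.1, hW'sub hp.2⟩
    have h4 : μ U = (μ.prod μ) ((fun p : G × G => p.1 * p.2) ⁻¹' U) := by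
      conv_lhs => rw [← hμ]
      exact Measure.map_apply_of_aemeasurable hAE hUo.measurableSet
    calc (0 : ℝ≥0∞) < μ V' * μ W' := h1
      _ ≤ μ U := by rw [h2, h4]; exact h3
  -- choose a compact set with mass > 1/2
  have hhalf : (2 : ℝ≥0∞)⁻¹ < μ Set.univ := by
    rw [measure_univ]
    exact ENNReal.inv_lt_one.mpr ENNReal.one_lt_two
  obtain ⟨K, -, hKcpt, hKgt⟩ := MeasurableSet.univ.exists_lt_isCompact hhalf
  have hKclosed : IsClosed K := hKcpt.isClosed
  have hKmeas : MeasurableSet K := hKclosed.measurableSet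
  set f : G → ℝ≥0∞ := fun x => μ ((fun t => x * t) ⁻¹' K) with hfdef
  have hf1 : f 1 = μ K := by
    simp only [hfdef]
    congr 1
    ext t
    simp
  have hfle1 : ∀ x, f x ≤ 1 := fun x => prob_le_one
  have husc : ∀ c, IsOpen {x : G | f x < c} := fun c => kelley_aux_usc μ hKcpt c
  have hlev : ∀ c, IsClosed {x : G | c ≤ f x} := by
    intro c
    have h : {x : G | c ≤ f x} = {x : G | f x < c}ᶜ := by
      ext x; simp [not_lt]
    rw [h]
    exact (husc c).isClosed_compl
  have hfmeas : Measurable f := measurable_of_Iio fun c => (husc c).measurableSet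
  have hfeq : ∀ x : G, f x = ∫⁻ s, f (x * s) ∂μ := fun x => kelley_aux_feq μ hμ hKclosed x
  -- two sets of measure > 1/2 intersect
  have hnodisj : ∀ x : G, (2 : ℝ≥0∞)⁻¹ < f x → ∃ t, x * t ∈ K ∧ t ∈ K := by
    intro x hx
    by_contra hcon
    push_neg at hcon
    have hdisj : Disjoint ((fun t => x * t) ⁻¹' K) K := by
      rw [Set.disjoint_left]
      intro t ht htK
      exact hcon t ht htK
    have hun : μ (((fun t => x * t) ⁻¹' K) ∪ K) ≤ 1 := prob_le_one
    rw [measure_union hdisj hKmeas] at hun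
    have hlt : (1 : ℝ≥0∞) < f x + μ K := by
      calc (1 : ℝ≥0∞) = 2⁻¹ + 2⁻¹ := by rw [ENNReal.inv_two_add_inv_two]
        _ < f x + μ K := ENNReal.add_lt_add hx hKgt
    exact absurd hun (not_le.mpr hlt)
  -- f attains its max on G
  have hC : IsCompact {x : G | μ K ≤ f x} := by
    apply IsCompact.of_isClosed_subset (hKcpt.mul hKcpt.inv) (hlev (μ K))
    intro x hx
    obtain ⟨t, htK, htK'⟩ := hnodisj x (lt_of_lt_of_le hKgt hx)
    exact ⟨x * t, htK, t⁻¹, Set.inv_mem_inv.mpr htK', by group⟩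
  have h1C : (1 : G) ∈ {x : G | μ K ≤ f x} := by simp [hf1]
  obtain ⟨x₀, hx₀C, hx₀max'⟩ := kelley_aux_max hlev hC ⟨1, h1C⟩
  have hx₀max : ∀ x, f x ≤ f x₀ := by
    intro x
    by_cases hxC : x ∈ {x : G | μ K ≤ f x}
    · exact hx₀max' x hxC
    · simp only [Set.mem_setOf_eq, not_le] at hxC
      exact le_trans hxC.le (le_trans (le_of_eq hf1.symm) (hx₀max' 1 h1C))
  -- a.e. s, f x₀ ≤ f (x₀ * s)
  have hmne : f x₀ ≠ ⊤ := (lt_of_le_of_lt (hfle1 x₀) (by simp)).ne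
  have hgmeas : Measurable (fun s => f (x₀ * s)) := hfmeas.comp (measurable_const_mul x₀)
  have hint : ∫⁻ s, f (x₀ * s) ∂μ = f x₀ := (hfeq x₀).symm
  have haesub : ∫⁻ s, (f x₀ - f (x₀ * s)) ∂μ = 0 := by
    rw [lintegral_sub hgmeas (by rw [hint]; exact hmne)
      (Filter.Eventually.of_forall fun s => hx₀max _)]
    rw [hint, lintegral_const, measure_univ, mul_one, tsub_self]
  have haem : ∀ᵐ s ∂μ, f x₀ ≤ f (x₀ * s) := by
    have h0 := (lintegral_eq_zero_iff (measurable_const.sub hgmeas)).mp haesub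
    filter_upwards [h0] with s hs
    exact tsub_eq_zero_iff_le.mp hs
  have hSsub : S ⊆ {s : G | f x₀ ≤ f (x₀ * s)} := by
    apply hconull
    · exact (hlev (f x₀)).preimage (continuous_mul_left x₀)
    · rw [← mem_ae_iff]
      exact haem
  -- S is compact
  have hScpt : IsCompact S := by
    apply IsCompact.of_isClosed_subset
      (((hKcpt.mul hKcpt.inv)).image (continuous_mul_left x₀⁻¹)) hSclosed
    intro s hs
    have h1 : (2 : ℝ≥0∞)⁻¹ < f (x₀ * s) :=
      lt_of_lt_of_le (lt_of_lt_of_le hKgt hx₀C) (hSsub hs)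
    obtain ⟨t, ht1, ht2⟩ := hnodisj (x₀ * s) h1
    refine ⟨x₀ * s, ⟨x₀ * s * t, ht1, t⁻¹, Set.inv_mem_inv.mpr ht2, by group⟩, by group⟩
  -- S is a subgroup
  have hone : (1 : G) ∈ S := kelley_aux_one_mem hScpt hSne hSmul
  have hSpow : ∀ x ∈ S, ∀ n : ℕ, x ^ (n + 1) ∈ S := by
    intro x hx n
    induction n with
    | zero => simpa using hx
    | succ k ih => rw [pow_succ]; exact hSmul _ ih _ hx
  have hinv : ∀ x ∈ S, x⁻¹ ∈ S := by
    intro x hx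
    set R : Set G := Set.range (fun n : ℕ => x ^ (n + 1)) with hR
    have hRS : R ⊆ S := by rintro _ ⟨n, rfl⟩; exact hSpow x hx n
    have hRmul : ∀ a ∈ R, ∀ b ∈ R, a * b ∈ R := by
      rintro _ ⟨m, rfl⟩ _ ⟨n, rfl⟩
      refine ⟨m + n + 1, ?_⟩
      show x ^ ((m + n + 1) + 1) = x ^ (m + 1) * x ^ (n + 1)
      have hmn : (m + n + 1) + 1 = (m + 1) + (n + 1) := by omega
      rw [hmn, pow_add]
    have hclmul := kelley_aux_closure_mul hRmul
    have hclS : closure R ⊆ S := closure_minimal hRS hSclosed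
    have hclcpt : IsCompact (closure R) :=
      IsCompact.of_isClosed_subset hScpt isClosed_closure hclS
    have h1cl : (1 : G) ∈ closure R :=
      kelley_aux_one_mem hclcpt ⟨x, subset_closure ⟨0, by simp⟩⟩ hclmul
    have hmt : Set.MapsTo (fun z => x⁻¹ * z) R S := by
      rintro _ ⟨n, rfl⟩
      show x⁻¹ * x ^ (n + 1) ∈ S
      have hxx : x⁻¹ * x ^ (n + 1) = x ^ n := by
        rw [pow_succ']
        simp [← mul_assoc]
      rw [hxx]
      cases n with
      | zero => simpa using hone
      | succ k => exact hSpow x hx k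
    have hres := (hmt.closure_left (continuous_mul_left x⁻¹) hSclosed) h1cl
    simpa using hres
  -- translation invariance of μ along S, first for compact sets
  have hinvK : ∀ t ∈ S, ∀ K' : Set G, IsCompact K' → μ ((fun z => t * z) ⁻¹' K') = μ K' := by
    intro t ht K' hK'
    have hK'cl : IsClosed K' := hK'.isClosed
    set f' : G → ℝ≥0∞ := fun x => μ ((fun z => x * z) ⁻¹' K') with hf'def
    have husc' : ∀ c, IsOpen {x : G | f' x < c} := fun c => kelley_aux_usc μ hK' c
    have hlev' : ∀ c, IsClosed {x : G | c ≤ f' x} := by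
      intro c
      have h : {x : G | c ≤ f' x} = {x : G | f' x < c}ᶜ := by
        ext x; simp [not_lt]
      rw [h]
      exact (husc' c).isClosed_compl
    obtain ⟨y₀, hy₀S, hy₀max⟩ := kelley_aux_max hlev' hScpt hSne
    have hupper : ∀ᵐ s ∂μ, f' (y₀ * s) ≤ f' y₀ := by
      filter_upwards [hSaemem] with s hs
      exact hy₀max _ (hSmul _ hy₀S _ hs)
    have hgmeas' : Measurable fun s => f' (y₀ * s) :=
      (measurable_of_Iio fun c => (husc' c).measurableSet).comp (measurable_const_mul y₀)
    have hint' : ∫⁻ s, f' (y₀ * s) ∂μ = f' y₀ := (kelley_aux_feq μ hμ hK'cl y₀).symm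
    have hne' : f' y₀ ≠ ⊤ := (lt_of_le_of_lt prob_le_one (by simp)).ne
    have haesub' : ∫⁻ s, (f' y₀ - f' (y₀ * s)) ∂μ = 0 := by
      rw [lintegral_sub hgmeas' (by rw [hint']; exact hne') hupper, hint', lintegral_const,
        measure_univ, mul_one, tsub_self]
    have haem' : ∀ᵐ s ∂μ, f' y₀ ≤ f' (y₀ * s) := by
      have h0 := (lintegral_eq_zero_iff (measurable_const.sub hgmeas')).mp haesub'
      filter_upwards [h0] with s hs
      exact tsub_eq_zero_iff_le.mp hs
    have hSsub' : S ⊆ {s : G | f' y₀ ≤ f' (y₀ * s)} := by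
      apply hconull
      · exact (hlev' (f' y₀)).preimage (continuous_mul_left y₀)
      · rw [← mem_ae_iff]
        exact haem'
    have hconst : ∀ u ∈ S, f' u = f' y₀ := by
      intro u hu
      have h1 : y₀⁻¹ * u ∈ S := hSmul _ (hinv _ hy₀S) _ hu
      have h2 : f' (y₀ * (y₀⁻¹ * u)) = f' y₀ :=
        le_antisymm (hy₀max _ (hSmul _ hy₀S _ h1)) (hSsub' h1)
      calc f' u = f' (y₀ * (y₀⁻¹ * u)) := by rw [mul_inv_cancel_left]
        _ = f' y₀ := h2
    have h1S : f' 1 = μ K' := by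
      simp only [hf'def]
      congr 1
      ext z
      simp
    calc f' t = f' y₀ := hconst t ht
      _ = f' 1 := (hconst 1 hone).symm
      _ = μ K' := h1S
  -- translation invariance for all measurable sets
  have hinvB : ∀ t ∈ S, ∀ B : Set G, MeasurableSet B → μ ((fun z => t * z) ⁻¹' B) = μ B := by
    intro t ht B hB
    have hpre : MeasurableSet ((fun z => t * z) ⁻¹' B) := (measurable_const_mul t) hB
    by_contra hne0
    rcases lt_or_gt_of_ne hne0 with hlt | hgt
    · obtain ⟨K₂, hsub, hcpt, hgt2⟩ := hB.exists_lt_isCompact hlt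
      have h1 : μ ((fun z => t * z) ⁻¹' K₂) ≤ μ ((fun z => t * z) ⁻¹' B) :=
        measure_mono (Set.preimage_mono hsub)
      rw [hinvK t ht K₂ hcpt] at h1
      exact absurd h1 (not_le.mpr hgt2)
    · obtain ⟨K₁, hsub, hcpt, hgt1⟩ := hpre.exists_lt_isCompact hgt
      have himg : (fun z => t * z) '' K₁ ⊆ B := by
        rintro _ ⟨k, hk, rfl⟩
        exact hsub hk
      have hKi : IsCompact ((fun z => t * z) '' K₁) := hcpt.image (continuous_mul_left t)
      have h1 : μ K₁ ≤ μ ((fun z => t * z) ⁻¹' ((fun z => t * z) '' K₁)) :=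
        measure_mono (Set.subset_preimage_image _ _)
      rw [hinvK t ht _ hKi] at h1
      have h2 : μ ((fun z => t * z) '' K₁) ≤ μ B := measure_mono himg
      exact absurd (le_trans h1 h2) (not_le.mpr hgt1)
  -- package everything
  let H : Subgroup G :=
    { carrier := S
      one_mem' := hone
      mul_mem' := fun {a b} ha hb => hSmul a ha b hb
      inv_mem' := fun {a} ha => hinv a ha }
  have hHS : (H : Set G) = S := rfl
  have hHmeas : MeasurableSet (H : Set G) := hHS ▸ hSmeas
  have emb : MeasurableEmbedding (Subtype.val : H → G) :=
    MeasurableEmbedding.subtype_coe hHmeas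
  set ν : Measure H := Measure.comap (Subtype.val : H → G) μ with hν
  have hmapν : Measure.map (Subtype.val : H → G) ν = μ := by
    rw [hν, emb.map_comap, Subtype.range_coe, hHS]
    exact Measure.restrict_eq_self_of_ae_mem hSaemem
  have hνuniv : ν Set.univ = 1 := by
    rw [hν, emb.comap_apply, Set.image_univ, Subtype.range_coe, hHS, hS1]
  refine ⟨H, ν, hHS ▸ hScpt, ⟨hνuniv⟩, ?_, hmapν.symm⟩
  intro h
  have hmulmeas : Measurable (fun x : H => h * x) :=
    Measurable.subtype_mk ((measurable_const_mul (h : G)).comp measurable_subtype_coe)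
  apply Measure.ext
  intro B hB
  rw [Measure.map_apply hmulmeas hB, hν, emb.comap_apply, emb.comap_apply]
  have himg : (Subtype.val '' ((fun x : H => h * x) ⁻¹' B))
      = (fun z => (h : G) * z) ⁻¹' (Subtype.val '' B) := by
    ext g
    simp only [Set.mem_image, Set.mem_preimage]
    constructor
    · rintro ⟨a, haB, rfl⟩
      exact ⟨h * a, haB, rfl⟩
    · rintro ⟨b, hbB, hbe⟩
      refine ⟨h⁻¹ * b, ?_, ?_⟩
      · have : h * (h⁻¹ * b) = b := by group
        rw [this]
        exact hbB
      · have : ((h⁻¹ * b : H) : G) = (h : G)⁻¹ * (b : G) := rfl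
        rw [this, hbe]
        group
  rw [himg]
  exact hinvB (h : G) h.2 _ (emb.measurableSet_image.mpr hB)
end

section
/- Let G be a locally compact Hausdorff topological group with Borel σ-algebra. For i = 1, 2, let H_i be a subgroup of G whose carrier is compact, and let ν_i be the left-translation-invariant Borel probability measure on H_i (with the subspace topology). If the pushforward of ν₁ under the inclusion H₁ → G equals the pushforward of ν₂ under the inclusion H₂ → G, then H₁ = H₂. -/
open MeasureTheory

lemma aux_mem_iff {G : Type*} [Group G]
    [TopologicalSpace G] [IsTopologicalGroup G] [T2Space G]
    [MeasurableSpace G] [BorelSpace G]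
    (H : Subgroup G) (hH : IsCompact (H : Set G))
    (ν : Measure H) [IsProbabilityMeasure ν]
    (hν : ∀ h : H, Measure.map (fun x : H => h * x) ν = ν) (x : G) :
    x ∈ H ↔ ∀ U : Set G, IsOpen U → x ∈ U →
      0 < Measure.map (Subtype.val : H → G) ν U := by
  haveI : CompactSpace H := isCompact_iff_compactSpace.mp hH
  haveI : BorelSpace H := Subtype.borelSpace (H : Set G)
  haveI : ν.IsMulLeftInvariant := ⟨hν⟩
  haveI : ν.IsOpenPosMeasure :=
    isOpenPosMeasure_of_mulLeftInvariant_of_compact Set.univ isCompact_univ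
      (by simp)
  constructor
  · intro hx U hU hxU
    rw [Measure.map_apply measurable_subtype_coe hU.measurableSet]
    exact ((hU.preimage continuous_subtype_val).measure_pos ν ⟨⟨x, hx⟩, hxU⟩)
  · intro hx
    by_contra hxH
    have hclosed : IsClosed (H : Set G) := hH.isClosed
    have h1 := hx (H : Set G)ᶜ hclosed.isOpen_compl hxH
    rw [Measure.map_apply measurable_subtype_coe
      hclosed.isOpen_compl.measurableSet] at h1
    have h2 : (Subtype.val : H → G) ⁻¹' (H : Set G)ᶜ = ∅ := by
      ext y; simp [y.2]
    rw [h2] at h1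
    simp at h1

/-- Injectivity of Kelley's correspondence: two compact subgroups of `G` whose
left-invariant Borel probability (Haar) measures push forward to the same measure
on `G` coincide. -/
theorem compact_subgroup_eq_of_pushforward_haar_eq {G : Type*} [Group G]
    [TopologicalSpace G] [IsTopologicalGroup G] [LocallyCompactSpace G] [T2Space G]
    [MeasurableSpace G] [BorelSpace G]
    (H₁ H₂ : Subgroup G) (hH₁ : IsCompact (H₁ : Set G)) (hH₂ : IsCompact (H₂ : Set G))
    (ν₁ : Measure H₁) (ν₂ : Measure H₂)
    [IsProbabilityMeasure ν₁] [IsProbabilityMeasure ν₂]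
    (hν₁ : ∀ h : H₁, Measure.map (fun x : H₁ => h * x) ν₁ = ν₁)
    (hν₂ : ∀ h : H₂, Measure.map (fun x : H₂ => h * x) ν₂ = ν₂)
    (h : Measure.map (Subtype.val : H₁ → G) ν₁ = Measure.map (Subtype.val : H₂ → G) ν₂) :
    H₁ = H₂ := by
  ext x
  rw [aux_mem_iff H₁ hH₁ ν₁ hν₁, aux_mem_iff H₂ hH₂ ν₂ hν₂, h]
end

section
/- Let G be a locally compact Hausdorff abelian topological group with Borel σ-algebra, and let μ be an inner regular (Radon) Borel probability measure on G satisfying μ ∗ μ = μ. For a continuous character χ : G → circle, write μ̂(χ) = ∫_G χ(g) dμ(g) ∈ ℂ. Then μ̂(χ) ∈ {0, 1} for every continuous character χ, and the set Λ = {χ : μ̂(χ) = 1} is the carrier of an open subgroup of the Pontryagin dual group of G (the group of continuous characters with pointwise multiplication and the compact-open topology); in particular μ̂ equals the indicator function 𝟙_Λ on the dual group. -/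
open MeasureTheory
open scoped MeasureTheory ENNReal

section Aux

variable {G : Type*} [CommGroup G] [TopologicalSpace G] [IsTopologicalGroup G]
  [MeasurableSpace G] [BorelSpace G]

lemma fourierAux_continuous (χ : PontryaginDual G) :
    Continuous (fun g : G => (χ g : ℂ)) :=
  continuous_subtype_val.comp χ.continuous

lemma fourierAux_integrable (μ : Measure G) [IsProbabilityMeasure μ]
    (χ : PontryaginDual G) : Integrable (fun g : G => (χ g : ℂ)) μ := by
  refine (integrable_const (1 : ℝ)).mono'
    ((fourierAux_continuous χ).aestronglyMeasurable) ?_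
  filter_upwards with g
  exact (Circle.norm_coe _).le

/-- The Fourier transform of an idempotent measure satisfies `z ^ 2 = z`. -/
lemma fourierAux_sq (μ : Measure G) [IsProbabilityMeasure μ] (hμ : μ ∗ₘ μ = μ)
    (χ : PontryaginDual G) :
    (∫ g, (χ g : ℂ) ∂μ) * (∫ g, (χ g : ℂ) ∂μ) = ∫ g, (χ g : ℂ) ∂μ := by
  have hmul : AEMeasurable (fun p : G × G => p.1 * p.2) (μ.prod μ) := by
    by_contra h
    rw [Measure.mconv, Measure.map_of_not_aemeasurable h] at hμ
    have : μ Set.univ = 0 := by rw [← hμ]; rfl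
    simp [measure_univ] at this
  conv_rhs => rw [← hμ]
  rw [Measure.mconv, integral_map hmul]
  · have : ∀ p : G × G, (χ (p.1 * p.2) : ℂ) = (χ p.1 : ℂ) * (χ p.2 : ℂ) := by
      intro p; rw [map_mul]; push_cast; ring
    simp_rw [this]
    rw [integral_prod_mul (fun a => (χ a : ℂ)) (fun a => (χ a : ℂ))]
  · rw [← Measure.mconv, hμ]
    exact (fourierAux_continuous χ).aestronglyMeasurable

lemma fourierAux_mem (μ : Measure G) [IsProbabilityMeasure μ] (hμ : μ ∗ₘ μ = μ)
    (χ : PontryaginDual G) : (∫ g, (χ g : ℂ) ∂μ) ∈ ({0, 1} : Set ℂ) := by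
  have h := fourierAux_sq μ hμ χ
  set z := ∫ g, (χ g : ℂ) ∂μ
  have : z * (z - 1) = 0 := by linear_combination h
  rcases mul_eq_zero.1 this with h0 | h1
  · exact Or.inl h0
  · exact Or.inr (by rw [Set.mem_singleton_iff]; linear_combination h1)

/-- If the Fourier coefficient is `1`, the character is a.e. equal to `1`. -/
lemma fourierAux_ae_one (μ : Measure G) [IsProbabilityMeasure μ]
    (χ : PontryaginDual G) (h : (∫ g, (χ g : ℂ) ∂μ) = 1) :
    ∀ᵐ g ∂μ, (χ g : ℂ) = 1 := by
  have hint : Integrable (fun g : G => (χ g : ℂ)) μ := fourierAux_integrable μ χ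
  have hintre' : Integrable (fun g : G => ((χ g : ℂ)).re) μ := hint.re
  have hre : ∫ g, (1 - ((χ g : ℂ)).re) ∂μ = 0 := by
    rw [integral_sub (integrable_const 1) hintre', integral_const]
    have : ∫ g, ((χ g : ℂ)).re ∂μ = (∫ g, (χ g : ℂ) ∂μ).re := integral_re hint
    rw [this, h]
    simp
  have hnonneg : 0 ≤ᵐ[μ] fun g => 1 - ((χ g : ℂ)).re := by
    filter_upwards with g
    have habs : ‖(χ g : ℂ)‖ = 1 := Circle.norm_coe _
    have := Complex.re_le_norm (χ g : ℂ)
    simp only [Pi.zero_apply, sub_nonneg]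
    linarith [habs ▸ this]
  have hintre : Integrable (fun g => 1 - ((χ g : ℂ)).re) μ :=
    (integrable_const 1).sub hintre'
  have := (integral_eq_zero_iff_of_nonneg_ae hnonneg hintre).1 hre
  filter_upwards [this] with g hg
  have hre1 : ((χ g : ℂ)).re = 1 := by
    have : (1 : ℝ) - ((χ g : ℂ)).re = 0 := hg
    linarith
  have habs : Complex.normSq (χ g : ℂ) = 1 := Circle.normSq_coe _
  have him : ((χ g : ℂ)).im = 0 := by
    have : ((χ g : ℂ)).re * ((χ g : ℂ)).re + ((χ g : ℂ)).im * ((χ g : ℂ)).im = 1 := by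
      rw [← Complex.normSq_apply]; exact habs
    nlinarith
  exact Complex.ext (by simp [hre1]) (by simp [him])

end Aux

/-- For an idempotent inner regular Borel probability measure `μ` on a locally compact
Hausdorff abelian group `G`, the Fourier–Stieltjes transform `μ̂(χ) = ∫ χ dμ` takes only
the values `0` and `1`, and `{χ | μ̂(χ) = 1}` is the carrier of an open subgroup of the
Pontryagin dual of `G`; in particular `μ̂` is the indicator function of that set. -/
theorem fourier_of_idempotent_measure_is_indicator_of_open_subgroup {G : Type*}
    [CommGroup G] [TopologicalSpace G] [IsTopologicalGroup G] [LocallyCompactSpace G]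
    [T2Space G] [MeasurableSpace G] [BorelSpace G]
    (μ : Measure G) [IsProbabilityMeasure μ] [μ.InnerRegular] (hμ : μ ∗ₘ μ = μ) :
    (∀ χ : PontryaginDual G, (∫ g, (χ g : ℂ) ∂μ) ∈ ({0, 1} : Set ℂ)) ∧
    (∃ Λ : Subgroup (PontryaginDual G),
      (Λ : Set (PontryaginDual G)) = {χ : PontryaginDual G | (∫ g, (χ g : ℂ) ∂μ) = 1} ∧
      IsOpen (Λ : Set (PontryaginDual G))) ∧
    (fun χ : PontryaginDual G => ∫ g, (χ g : ℂ) ∂μ) =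
      Set.indicator {χ : PontryaginDual G | (∫ g, (χ g : ℂ) ∂μ) = 1}
        (1 : PontryaginDual G → ℂ) := by
  have hmem := fourierAux_mem μ hμ
  -- the subgroup
  have hone : (∫ g, ((1 : PontryaginDual G) g : ℂ) ∂μ) = 1 := by
    have : (∫ g, ((1 : PontryaginDual G) g : ℂ) ∂μ) = ∫ (_ : G), (1 : ℂ) ∂μ := rfl
    rw [this, integral_const]
    simp
  have hmul : ∀ χ ψ : PontryaginDual G, (∫ g, (χ g : ℂ) ∂μ) = 1 →
      (∫ g, (ψ g : ℂ) ∂μ) = 1 → (∫ g, ((χ * ψ) g : ℂ) ∂μ) = 1 := by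
    intro χ ψ hχ hψ
    have h1 := fourierAux_ae_one μ χ hχ
    have h2 := fourierAux_ae_one μ ψ hψ
    show (∫ g, ((χ * ψ) g : ℂ) ∂μ) = 1
    have : ∀ᵐ g ∂μ, ((χ * ψ) g : ℂ) = ((1 : PontryaginDual G) g : ℂ) := by
      filter_upwards [h1, h2] with g hg1 hg2
      show ((χ g * ψ g : Circle) : ℂ) = _
      push_cast
      rw [hg1, hg2]; simp only [one_mul]; rfl
    rw [integral_congr_ae this, hone]
  have hinv : ∀ χ : PontryaginDual G, (∫ g, (χ g : ℂ) ∂μ) = 1 →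
      (∫ g, (χ⁻¹ g : ℂ) ∂μ) = 1 := by
    intro χ hχ
    have h1 := fourierAux_ae_one μ χ hχ
    show (∫ g, (χ⁻¹ g : ℂ) ∂μ) = 1
    have : ∀ᵐ g ∂μ, (χ⁻¹ g : ℂ) = ((1 : PontryaginDual G) g : ℂ) := by
      filter_upwards [h1] with g hg
      show (((χ g)⁻¹ : Circle) : ℂ) = _
      push_cast
      rw [hg]; simp only [inv_one]; rfl
    rw [integral_congr_ae this, hone]
  let Λ : Subgroup (PontryaginDual G) :=
    { carrier := {χ : PontryaginDual G | (∫ g, (χ g : ℂ) ∂μ) = 1}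
      mul_mem' := fun ha hb => hmul _ _ ha hb
      one_mem' := hone
      inv_mem' := fun ha => hinv _ ha }
  refine ⟨hmem, ⟨Λ, rfl, ?_⟩, ?_⟩
  · -- openness
    -- choose a compact set of large measure
    obtain ⟨K, -, hKc, hKm⟩ :=
      (‹μ.InnerRegular›.innerRegular) MeasurableSet.univ (3 / 4)
        (by rw [measure_univ]; exact ENNReal.div_lt_of_lt_mul (by norm_num))
    have hKmeas : MeasurableSet K := hKc.isClosed.measurableSet
    have hKr : (3 / 4 : ℝ) ≤ (μ K).toReal := by
      have := ENNReal.toReal_mono (measure_ne_top μ K) hKm.le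
      simpa using this
    have hKcompl : (μ Kᶜ).toReal ≤ 1 / 4 := by
      rw [measure_compl hKmeas (measure_ne_top μ K), measure_univ,
        ENNReal.toReal_sub_of_le prob_le_one ENNReal.one_ne_top]
      simp only [ENNReal.toReal_one]
      linarith
    -- the basic open neighborhood of 1
    set U : Set Circle := (fun z : Circle => (z : ℂ)) ⁻¹' Metric.ball (1 : ℂ) (1 / 4) with hU
    have hUopen : IsOpen U := Metric.isOpen_ball.preimage continuous_subtype_val
    set V : Set (PontryaginDual G) :=
      (ContinuousMonoidHom.toContinuousMap :
        ContinuousMonoidHom G Circle → C(G, Circle)) ⁻¹'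
        {f : C(G, Circle) | Set.MapsTo f K U} with hV
    have hVopen : IsOpen V :=
      (ContinuousMap.isOpen_setOf_mapsTo hKc hUopen).preimage
        (ContinuousMonoidHom.isInducing_toContinuousMap G Circle).continuous
    have h1V : (1 : PontryaginDual G) ∈ V := by
      intro x _
      show ((1 : Circle) : ℂ) ∈ Metric.ball (1 : ℂ) (1 / 4)
      simp
    have hVsub : V ⊆ {χ : PontryaginDual G | (∫ g, (χ g : ℂ) ∂μ) = 1} := by
      intro χ hχ
      have hint : Integrable (fun g : G => (χ g : ℂ)) μ := fourierAux_integrable μ χ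
      have hintn : Integrable (fun g : G => ‖(χ g : ℂ) - 1‖) μ :=
        (hint.sub (integrable_const 1)).norm
      have hbound : ‖(∫ g, (χ g : ℂ) ∂μ) - 1‖ ≤ 3 / 4 := by
        have heq : (∫ g, (χ g : ℂ) ∂μ) - 1 = ∫ g, ((χ g : ℂ) - 1) ∂μ := by
          rw [integral_sub hint (integrable_const 1), integral_const]
          simp
        rw [heq]
        have h1 : ‖∫ g, ((χ g : ℂ) - 1) ∂μ‖ ≤ ∫ g, ‖(χ g : ℂ) - 1‖ ∂μ :=
          norm_integral_le_integral_norm _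
        have hsplit : ∫ g, ‖(χ g : ℂ) - 1‖ ∂μ =
            (∫ g in K, ‖(χ g : ℂ) - 1‖ ∂μ) + ∫ g in Kᶜ, ‖(χ g : ℂ) - 1‖ ∂μ :=
          (integral_add_compl hKmeas hintn).symm
        have hK1 : (∫ g in K, ‖(χ g : ℂ) - 1‖ ∂μ) ≤ 1 / 4 := by
          have : (∫ g in K, ‖(χ g : ℂ) - 1‖ ∂μ) ≤ ∫ _ in K, (1 / 4 : ℝ) ∂μ := by
            refine setIntegral_mono_on hintn.integrableOn (integrable_const _) hKmeas ?_
            intro x hx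
            have h' : dist ((χ x : ℂ)) (1 : ℂ) < 1 / 4 := hχ hx
            rw [dist_eq_norm] at h'
            exact h'.le
          refine this.trans ?_
          rw [setIntegral_const]
          have : (μ K).toReal ≤ 1 := by
            simpa using ENNReal.toReal_mono (by norm_num) (prob_le_one (μ := μ) (s := K))
          calc (μ K).toReal • (1 / 4 : ℝ) = (μ K).toReal * (1 / 4) := rfl
            _ ≤ 1 * (1 / 4) := by gcongr
            _ = 1 / 4 := by ring
        have hK2 : (∫ g in Kᶜ, ‖(χ g : ℂ) - 1‖ ∂μ) ≤ 1 / 2 := by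
          have hb : ∀ g, ‖(χ g : ℂ) - 1‖ ≤ 2 := by
            intro g
            calc ‖(χ g : ℂ) - 1‖ ≤ ‖(χ g : ℂ)‖ + ‖(1 : ℂ)‖ := norm_sub_le _ _
              _ = 2 := by rw [Circle.norm_coe, norm_one]; norm_num
          have : (∫ g in Kᶜ, ‖(χ g : ℂ) - 1‖ ∂μ) ≤ ∫ _ in Kᶜ, (2 : ℝ) ∂μ := by
            refine setIntegral_mono_on hintn.integrableOn (integrable_const _)
              hKmeas.compl (fun x _ => hb x)
          refine this.trans ?_
          rw [setIntegral_const]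
          calc (μ Kᶜ).toReal • (2 : ℝ) = (μ Kᶜ).toReal * 2 := rfl
            _ ≤ (1 / 4) * 2 := by gcongr
            _ = 1 / 2 := by ring
        calc ‖∫ g, ((χ g : ℂ) - 1) ∂μ‖ ≤ ∫ g, ‖(χ g : ℂ) - 1‖ ∂μ := h1
          _ = _ := hsplit
          _ ≤ 1 / 4 + 1 / 2 := add_le_add hK1 hK2
          _ = 3 / 4 := by norm_num
      rcases hmem χ with h0 | h1
      · exfalso
        rw [h0] at hbound
        simp at hbound
        norm_num at hbound
      · exact h1
    exact Subgroup.isOpen_of_mem_nhds _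
      (Filter.mem_of_superset (hVopen.mem_nhds h1V) hVsub)
  · -- indicator form
    funext χ
    rcases hmem χ with h0 | h1
    · rw [h0, Set.indicator_of_notMem]
      intro hχ
      rw [Set.mem_setOf_eq, h0] at hχ
      exact zero_ne_one hχ
    · rw [Set.indicator_of_mem
        (show χ ∈ {χ : PontryaginDual G | (∫ g, (χ g : ℂ) ∂μ) = 1} from h1)]
      simp only [Pi.one_apply]
      exact h1
end

section
/- Let G be a locally compact Hausdorff topological group with Borel σ-algebra, and let μ be an inner regular (Radon) Borel probability measure on G satisfying μ ∗ μ = μ. Then μ is invariant under inversion: the pushforward of μ under the map g ↦ g⁻¹ equals μ. -/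
open MeasureTheory Set Filter
open scoped MeasureTheory Pointwise ENNReal Topology

namespace KawadaItoAux

set_option linter.unusedSectionVars false

/-- The support of a measure: the set of points all of whose open neighborhoods
have positive measure. -/
def msupp {G : Type*} [TopologicalSpace G] [MeasurableSpace G] (μ : Measure G) : Set G :=
  {x | ∀ U : Set G, IsOpen U → x ∈ U → 0 < μ U}


section Basic

variable {G : Type*} [TopologicalSpace G] [MeasurableSpace G] [BorelSpace G] (μ : Measure G)

lemma isClosed_msupp : IsClosed (msupp μ) := by
  rw [← isOpen_compl_iff, isOpen_iff_mem_nhds]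
  intro x hx
  simp only [msupp, mem_compl_iff, mem_setOf_eq, not_forall] at hx
  obtain ⟨U, hU, hxU, hμU⟩ := hx
  have hμU : μ U = 0 := le_antisymm (not_lt.1 hμU) (zero_le)
  filter_upwards [hU.mem_nhds hxU] with y hy
  simp only [msupp, mem_compl_iff, mem_setOf_eq, not_forall]
  exact ⟨U, hU, hy, by simp [hμU]⟩

lemma measure_compl_msupp [T2Space G] [IsProbabilityMeasure μ] [μ.InnerRegular] :
    μ (msupp μ)ᶜ = 0 := by
  by_contra h
  have hmeas : MeasurableSet (msupp μ)ᶜ := (isClosed_msupp μ).measurableSet.compl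
  obtain ⟨K, hKsub, hKcomp, hKpos⟩ :=
    Measure.InnerRegular.innerRegular (μ := μ) hmeas 0 (pos_iff_ne_zero.2 h)
  have hU : ∀ x : G, ∃ U : Set G, IsOpen U ∧ μ U = 0 ∧ (x ∈ K → x ∈ U) := by
    intro x
    by_cases hx : x ∈ K
    · have := hKsub hx
      simp only [msupp, mem_compl_iff, mem_setOf_eq, not_forall] at this
      obtain ⟨U, hUo, hxU, hμU⟩ := this
      exact ⟨U, hUo, le_antisymm (not_lt.1 hμU) (zero_le), fun _ => hxU⟩
    · exact ⟨∅, isOpen_empty, measure_empty, fun h => absurd h hx⟩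
  choose U hUo hU0 hUK using hU
  obtain ⟨t, ht⟩ := hKcomp.elim_finite_subcover U hUo (fun x hx => mem_iUnion.2 ⟨x, hUK x hx⟩)
  have : μ K ≤ ∑ x ∈ t, μ (U x) :=
    le_trans (measure_mono ht) (measure_biUnion_finset_le t U)
  simp only [hU0, Finset.sum_const_zero] at this
  exact absurd (le_antisymm this (zero_le)) (ne_of_gt hKpos)

end Basic

section Group

variable {G : Type*} [Group G] [TopologicalSpace G] [IsTopologicalGroup G]
  [LocallyCompactSpace G] [T2Space G] [MeasurableSpace G] [BorelSpace G]
  (μ : Measure G) [IsProbabilityMeasure μ] [μ.InnerRegular]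

lemma key1 (hid : Measure.map (fun p : G × G => p.1 * p.2) (μ.prod μ) = μ)
    {B : Set G} (hB : MeasurableSet B) :
    μ B = ∫⁻ x, μ {y | x * y ∈ B} ∂μ := by
  have h0 : AEMeasurable (fun p : G × G => p.1 * p.2) (μ.prod μ) := by
    by_contra h
    rw [Measure.map_of_not_aemeasurable h] at hid
    exact (IsProbabilityMeasure.ne_zero μ) hid.symm
  set g := h0.mk _ with hg_def
  have hg : Measurable g := h0.measurable_mk
  have heq : (fun p : G × G => p.1 * p.2) =ᵐ[μ.prod μ] g := h0.ae_eq_mk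
  have h1 : μ B = (μ.prod μ) (g ⁻¹' B) := by
    conv_lhs => rw [← hid]
    rw [Measure.map_congr heq, Measure.map_apply hg hB]
  rw [h1, Measure.prod_apply (hg hB)]
  have h2 : ∀ᵐ x ∂μ, ∀ᵐ y ∂μ, x * y = g (x, y) := Measure.ae_ae_of_ae_prod heq
  refine lintegral_congr_ae ?_
  filter_upwards [h2] with x hx
  refine (measure_congr ?_).symm
  filter_upwards [hx] with y hy
  show (x * y ∈ B) = (g (x, y) ∈ B)
  rw [hy]

lemma closed_superlevel {K : Set G} (hK : IsCompact K) (c : ℝ≥0∞) :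
    IsClosed {s : G | c ≤ μ {y | s * y ∈ K}} := by
  rcases eq_or_ne c 0 with rfl | hc0
  · convert isClosed_univ
    ext s; simp
  rw [← closure_subset_iff_isClosed]
  intro s hs
  set Ks : Set G := {y | s * y ∈ K} with hKs_def
  have hKs_eq : Ks = (fun z => s⁻¹ * z) '' K := by
    ext y
    simp only [hKs_def, mem_setOf_eq, mem_image]
    constructor
    · intro h; exact ⟨s * y, h, by group⟩
    · rintro ⟨k, hk, rfl⟩; simpa using hk
  have hKs_comp : IsCompact Ks := by
    rw [hKs_eq]; exact hK.image (continuous_const.mul continuous_id)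
  have hKs_closed : IsClosed Ks := hKs_comp.isClosed
  set T : Set G → Set G := fun V => {y | ∃ v ∈ V, (s * v) * y ∈ K} with hT_def
  have hT_mono : ∀ {V W : Set G}, V ⊆ W → T V ⊆ T W := by
    intro V W hVW y ⟨v, hv, h⟩; exact ⟨v, hVW hv, h⟩
  have stepA : ∀ V ∈ 𝓝 (1 : G), c ≤ μ (T V) := by
    intro V hV
    have hnbk : (fun t => s⁻¹ * t) ⁻¹' V ∈ 𝓝 s :=
      ContinuousAt.preimage_mem_nhds (Continuous.continuousAt (by fun_prop))
        (by simpa using hV)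
    obtain ⟨s', hs'V, hs'A⟩ := mem_closure_iff_nhds.1 hs _ hnbk
    refine le_trans hs'A (measure_mono ?_)
    intro y hy
    exact ⟨s⁻¹ * s', hs'V, by simpa [mul_assoc] using hy⟩
  have hTcomp : ∀ {V : Set G}, IsCompact V → IsCompact (T V) := by
    intro V hV
    have : T V = V⁻¹ * Ks := by
      ext y
      constructor
      · rintro ⟨v, hv, hvy⟩
        exact Set.mem_mul.2 ⟨v⁻¹, Set.inv_mem_inv.2 hv, v * y, by simpa [hKs_def, mul_assoc] using hvy,
          by group⟩
      · rintro ⟨a, ha, b, hb, rfl⟩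
        refine ⟨a⁻¹, by simpa using ha, ?_⟩
        have : s * (a⁻¹ * (a * b)) ∈ K := by simpa [hKs_def, mul_assoc] using hb
        simpa [mul_assoc] using this
    rw [this]
    exact hV.inv.mul hKs_comp
  -- now the contradiction argument
  by_contra hlt
  simp only [mem_setOf_eq, not_le, ← hKs_def] at hlt
  have hc1 : c ≤ 1 := le_trans (stepA univ univ_mem) prob_le_one
  have h1 : 1 - c < μ Ksᶜ := by
    rw [prob_compl_eq_one_sub hKs_closed.measurableSet]
    exact ((ENNReal.cancel_of_ne ENNReal.one_ne_top).tsub_lt_tsub_iff_left_of_le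
      (ENNReal.cancel_of_ne (hc1.trans_lt ENNReal.one_lt_top).ne) hc1).2 hlt
  obtain ⟨C, hCsub, hCcomp, hCpos⟩ :=
    Measure.InnerRegular.innerRegular (μ := μ) hKs_closed.measurableSet.compl _ h1
  -- cover C by the complements of T V, over compact neighborhoods V of 1
  have hcover : C ⊆ ⋃ i : {V : Set G // V ∈ 𝓝 (1 : G) ∧ IsCompact V}, (T i.1)ᶜ := by
    intro x hx
    rw [mem_iUnion]
    by_contra hcon
    push_neg at hcon
    simp only [mem_compl_iff, not_not] at hcon
    -- then x ∈ Ks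
    have : x ∈ Ks := by
      rw [← hKs_closed.closure_eq]
      rw [mem_closure_iff_nhds]
      intro W hW
      have hWx : (fun v => v * x) ⁻¹' W ∈ 𝓝 (1 : G) :=
        ContinuousAt.preimage_mem_nhds (Continuous.continuousAt (by fun_prop))
          (by simpa using hW)
      obtain ⟨V, hVmem, hVsub, hVcomp⟩ := local_compact_nhds hWx
      obtain ⟨v, hvV, hvK⟩ := hcon ⟨V, hVmem, hVcomp⟩
      exact ⟨v * x, hVsub hvV, by simpa [hKs_def, mul_assoc] using hvK⟩
    exact (hCsub hx) this
  obtain ⟨t, ht⟩ := hCcomp.elim_finite_subcover _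
    (fun i : {V : Set G // V ∈ 𝓝 (1 : G) ∧ IsCompact V} =>
      (isOpen_compl_iff.2 (hTcomp i.2.2).isClosed)) hcover
  -- W: compact neighborhood inside all of them
  have hInt : (⋂ i ∈ t, (i : {V : Set G // V ∈ 𝓝 (1 : G) ∧ IsCompact V}).1) ∈ 𝓝 (1 : G) :=
    (Filter.biInter_finset_mem t).2 fun i _ => i.2.1
  obtain ⟨W, hWmem, hWsub, hWcomp⟩ := local_compact_nhds hInt
  have hTW : T W ⊆ Cᶜ := by
    intro y hy
    by_contra hyC
    simp only [mem_compl_iff, not_not] at hyC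
    obtain ⟨i, hit, hyi⟩ := by
      have := ht hyC
      simpa only [mem_iUnion, exists_prop] using this
    exact hyi (hT_mono (fun z hz => by
      have := hWsub hz
      simp only [mem_iInter] at this
      exact this i hit) hy)
  have h2 : c ≤ 1 - μ C := by
    calc c ≤ μ (T W) := stepA W hWmem
      _ ≤ μ Cᶜ := measure_mono hTW
      _ = 1 - μ C := prob_compl_eq_one_sub hCcomp.isClosed.measurableSet
  have h3 : c + μ C ≤ 1 := by
    calc c + μ C ≤ (1 - μ C) + μ C := add_le_add_left h2 _
      _ = 1 := tsub_add_cancel_of_le prob_le_one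
  have h4 : 1 < c + μ C := by
    calc 1 = (1 - c) + c := (tsub_add_cancel_of_le hc1).symm
      _ < μ C + c := ENNReal.add_lt_add_right (fun h => by simp [h] at hc1) hCpos
      _ = c + μ C := add_comm _ _
  exact absurd h3 (not_le.2 h4)

lemma compact_superlevel {K : Set G} (hK : IsCompact K) {c : ℝ≥0∞} (hc : 0 < c) :
    IsCompact {s : G | c ≤ μ {y | s * y ∈ K}} := by
  -- choose a compact C with 1 - c < μ C
  have h1 : (1 : ℝ≥0∞) - c < μ univ := by
    rw [measure_univ]
    exact ENNReal.sub_lt_self ENNReal.one_ne_top one_ne_zero hc.ne'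
  obtain ⟨C, -, hCcomp, hCpos⟩ :=
    Measure.InnerRegular.innerRegular (μ := μ) MeasurableSet.univ _ h1
  refine IsCompact.of_isClosed_subset (hK.mul hCcomp.inv) (closed_superlevel μ hK c) ?_
  intro s hs
  -- {y | s*y ∈ K} must intersect C
  have hinter : ({y | s * y ∈ K} ∩ C).Nonempty := by
    by_contra hcon
    rw [not_nonempty_iff_eq_empty] at hcon
    have hsub : {y | s * y ∈ K} ⊆ Cᶜ := by
      intro y hy
      intro hyC
      exact absurd (Set.mem_inter hy hyC) (by simp [hcon])
    have h2 : c ≤ 1 - μ C :=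
      le_trans hs (le_trans (measure_mono hsub)
        (le_of_eq (prob_compl_eq_one_sub hCcomp.isClosed.measurableSet)))
    have h3 : c + μ C ≤ 1 := by
      calc c + μ C ≤ (1 - μ C) + μ C := add_le_add_left h2 _
        _ = 1 := tsub_add_cancel_of_le prob_le_one
    have h4 : 1 < c + μ C := by
      calc 1 = (1 - c) + c := (tsub_add_cancel_of_le
            (le_trans hs prob_le_one)).symm
        _ < μ C + c := ENNReal.add_lt_add_right
            (((le_trans hs prob_le_one).trans_lt ENNReal.one_lt_top).ne) hCpos
        _ = c + μ C := add_comm _ _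
    exact absurd h3 (not_le.2 h4)
  obtain ⟨y, hyK, hyC⟩ := hinter
  exact Set.mem_mul.2 ⟨s * y, hyK, y⁻¹, Set.inv_mem_inv.2 hyC, by group⟩

lemma exists_max {K : Set G} (hK : IsCompact K) (hm : 0 < ⨆ s : G, μ {y | s * y ∈ K}) :
    ∃ s₀ : G, μ {y | s₀ * y ∈ K} = ⨆ s : G, μ {y | s * y ∈ K} := by
  set m := ⨆ s : G, μ {y | s * y ∈ K} with hm_def
  set A : {c : ℝ≥0∞ // 0 < c ∧ c < m} → Set G :=
    fun c => {s : G | c.1 ≤ μ {y | s * y ∈ K}} with hA_def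
  have hne : Nonempty {c : ℝ≥0∞ // 0 < c ∧ c < m} := by
    obtain ⟨c, hc1, hc2⟩ := exists_between hm
    exact ⟨⟨c, hc1, hc2⟩⟩
  have hAne : ∀ i, (A i).Nonempty := by
    intro i
    obtain ⟨s, hs⟩ := lt_iSup_iff.1 i.2.2
    exact ⟨s, hs.le⟩
  have hdir : Directed (fun x1 x2 : Set G => x1 ⊇ x2) A := by
    intro i j
    refine ⟨⟨max i.1 j.1, lt_max_of_lt_left i.2.1, max_lt i.2.2 j.2.2⟩,
      fun s hs => ?_, fun s hs => ?_⟩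
    · have hs' : max i.1 j.1 ≤ μ {y | s * y ∈ K} := hs
      exact le_trans (le_max_left _ _) hs'
    · have hs' : max i.1 j.1 ≤ μ {y | s * y ∈ K} := hs
      exact le_trans (le_max_right _ _) hs'
  obtain ⟨s₀, hs₀⟩ := IsCompact.nonempty_iInter_of_directed_nonempty_isCompact_isClosed
    A hdir hAne (fun i => compact_superlevel μ hK i.2.1)
    (fun i => closed_superlevel μ hK i.1)
  refine ⟨s₀, le_antisymm (le_iSup (fun s => μ {y | s * y ∈ K}) s₀) ?_⟩
  by_contra hcon
  push_neg at hcon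
  obtain ⟨c, hc1, hc2⟩ := exists_between hcon
  have : s₀ ∈ A ⟨c, lt_of_le_of_lt (zero_le) hc1, hc2⟩ := by
    simp only [mem_iInter] at hs₀
    exact hs₀ _
  exact absurd (lt_of_lt_of_le hc1 this) (lt_irrefl _)

lemma eq_max_on_supp (hid : Measure.map (fun p : G × G => p.1 * p.2) (μ.prod μ) = μ)
    {K : Set G} (hK : IsCompact K)
    {s₀ : G} (hs₀ : μ {y | s₀ * y ∈ K} = ⨆ s : G, μ {y | s * y ∈ K}) :
    ∀ t ∈ msupp μ, μ {y | (s₀ * t) * y ∈ K} = ⨆ s : G, μ {y | s * y ∈ K} := by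
  set m := ⨆ s : G, μ {y | s * y ∈ K} with hm_def
  have hm1 : m ≤ 1 := by
    rw [hm_def]
    exact iSup_le fun s => prob_le_one
  have hle : ∀ x : G, μ {y | (s₀ * x) * y ∈ K} ≤ m :=
    fun x => le_iSup (fun s => μ {y | s * y ∈ K}) (s₀ * x)
  -- the key integral identity
  have hB₀ : MeasurableSet {y | s₀ * y ∈ K} :=
    (hK.isClosed.preimage (continuous_const.mul continuous_id)).measurableSet
  have hint : ∫⁻ x, μ {y | (s₀ * x) * y ∈ K} ∂μ = m := by
    have := key1 μ hid hB₀
    rw [hs₀] at this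
    conv_rhs => rw [this]
    apply lintegral_congr
    intro x
    congr 1
    ext y
    simp only [mem_setOf_eq, mul_assoc]
  intro t ht
  refine le_antisymm (hle t) ?_
  by_contra hcon
  push_neg at hcon
  obtain ⟨c, hc1, hc2⟩ := exists_between hcon
  -- the open set O of points where the value is < c
  set O : Set G := {x : G | μ {y | (s₀ * x) * y ∈ K} < c} with hO_def
  have hO_open : IsOpen O := by
    have hclosed : IsClosed {s : G | c ≤ μ {y | s * y ∈ K}} := closed_superlevel μ hK c
    have : O = (fun x => s₀ * x) ⁻¹' {s : G | c ≤ μ {y | s * y ∈ K}}ᶜ := by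
      ext x
      simp only [hO_def, mem_setOf_eq, mem_preimage, mem_compl_iff, not_le]
    rw [this]
    exact (hclosed.isOpen_compl).preimage (continuous_const.mul continuous_id)
  have hδ : 0 < μ O := ht O hO_open hc1
  set δ := μ O with hδ_def
  have hδ1 : δ ≤ 1 := prob_le_one
  have hbound : ∫⁻ x, μ {y | (s₀ * x) * y ∈ K} ∂μ ≤ c * δ + m * (1 - δ) := by
    have hle2 : (fun x => μ {y | (s₀ * x) * y ∈ K}) ≤
        fun x => O.indicator (fun _ => c) x + Oᶜ.indicator (fun _ => m) x := by
      intro x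
      by_cases hx : x ∈ O
      · have hx' : x ∉ Oᶜ := by simpa using hx
        simp only [Set.indicator_of_mem hx, Set.indicator_of_notMem hx', add_zero]
        exact le_of_lt hx
      · simp only [Set.indicator_of_notMem hx,
          Set.indicator_of_mem (Set.mem_compl hx), zero_add]
        exact hle x
    calc ∫⁻ x, μ {y | (s₀ * x) * y ∈ K} ∂μ
        ≤ ∫⁻ x, (O.indicator (fun _ => c) x + Oᶜ.indicator (fun _ => m) x) ∂μ :=
          lintegral_mono hle2
      _ = c * δ + m * (1 - δ) := by
          rw [lintegral_add_left (measurable_const.indicator hO_open.measurableSet)]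
          rw [lintegral_indicator_const hO_open.measurableSet,
            lintegral_indicator_const hO_open.measurableSet.compl,
            prob_compl_eq_one_sub hO_open.measurableSet]
  have hstrict : c * δ + m * (1 - δ) < m := by
    have h1 : c * δ < m * δ := by
      rw [mul_comm c, mul_comm m]
      exact ENNReal.mul_lt_mul_right hδ.ne' (hδ1.trans_lt ENNReal.one_lt_top).ne hc2
    calc c * δ + m * (1 - δ) < m * δ + m * (1 - δ) :=
          ENNReal.add_lt_add_right (by
            refine (lt_of_le_of_lt ?_ ENNReal.one_lt_top).ne
            calc m * (1 - δ) ≤ 1 * 1 := by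
                  exact mul_le_mul' hm1 (tsub_le_self : (1:ℝ≥0∞) - δ ≤ 1)
              _ = 1 := one_mul 1) h1
      _ = m * (δ + (1 - δ)) := (mul_add m δ (1 - δ)).symm
      _ = m := by rw [add_tsub_cancel_of_le hδ1, mul_one]
  rw [hint] at hbound
  exact absurd (lt_of_le_of_lt hbound hstrict) (lt_irrefl _)

lemma msupp_mul (hid : Measure.map (fun p : G × G => p.1 * p.2) (μ.prod μ) = μ)
    {x y : G} (hx : x ∈ msupp μ) (hy : y ∈ msupp μ) : x * y ∈ msupp μ := by
  intro U hU hxyU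
  obtain ⟨V, W, hV, hW, hxV, hyW, hVW⟩ :=
    isOpen_prod_iff.1 (hU.preimage (continuous_mul : Continuous fun p : G × G => p.1 * p.2))
      x y hxyU
  have hμW : 0 < μ W := hy W hW hyW
  have key := key1 μ hid hU.measurableSet
  have hlow : (fun x' => V.indicator (fun _ => μ W) x') ≤ fun x' => μ {y' | x' * y' ∈ U} := by
    intro x'
    simp only
    by_cases hx' : x' ∈ V
    · rw [Set.indicator_of_mem hx']
      refine measure_mono fun y' hy' => ?_
      exact hVW (Set.mk_mem_prod hx' hy')
    · rw [Set.indicator_of_notMem hx']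
      exact zero_le
  have : μ W * μ V ≤ μ U := by
    rw [key]
    calc μ W * μ V = ∫⁻ x', V.indicator (fun _ => μ W) x' ∂μ :=
          (lintegral_indicator_const hV.measurableSet _).symm
      _ ≤ _ := lintegral_mono hlow
  exact lt_of_lt_of_le (ENNReal.mul_pos hμW.ne' (hx V hV hxV).ne') this

lemma msupp_nonempty : (msupp μ).Nonempty := by
  rw [nonempty_iff_ne_empty]
  intro h
  have := measure_compl_msupp μ
  rw [h, compl_empty, measure_univ] at this
  exact one_ne_zero this

lemma msupp_compact (hid : Measure.map (fun p : G × G => p.1 * p.2) (μ.prod μ) = μ) :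
    IsCompact (msupp μ) := by
  -- pick a compact of positive measure
  obtain ⟨K₀, -, hK₀comp, hK₀pos⟩ :=
    Measure.InnerRegular.innerRegular (μ := μ) MeasurableSet.univ 0 (by simp)
  set m := ⨆ s : G, μ {y | s * y ∈ K₀} with hm_def
  have hm : 0 < m := by
    refine lt_of_lt_of_le hK₀pos (le_trans (le_of_eq ?_) (le_iSup _ (1 : G)))
    congr 1; ext y; simp
  obtain ⟨s₀, hs₀⟩ := exists_max μ hK₀comp hm
  have hsub : msupp μ ⊆ (fun t => s₀ * t) ⁻¹' {s : G | m ≤ μ {y | s * y ∈ K₀}} := by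
    intro t ht
    exact le_of_eq (eq_max_on_supp μ hid hK₀comp hs₀ t ht).symm
  refine IsCompact.of_isClosed_subset ?_ (isClosed_msupp μ) hsub
  have : (fun t : G => s₀ * t) ⁻¹' {s : G | m ≤ μ {y | s * y ∈ K₀}} =
      (fun t : G => s₀⁻¹ * t) '' {s : G | m ≤ μ {y | s * y ∈ K₀}} := by
    ext t
    simp only [mem_preimage, mem_image, mem_setOf_eq]
    constructor
    · intro h; exact ⟨s₀ * t, h, by group⟩
    · rintro ⟨u, hu, rfl⟩; simpa [mul_assoc] using hu
  rw [this]
  exact (compact_superlevel μ hK₀comp hm).image (continuous_const.mul continuous_id)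

lemma msupp_inv (hid : Measure.map (fun p : G × G => p.1 * p.2) (μ.prod μ) = μ)
    {x : G} (hx : x ∈ msupp μ) : x⁻¹ ∈ msupp μ := by
  -- powers of x with positive integer exponents lie in msupp μ
  have hpow : ∀ k : ℤ, 1 ≤ k → x ^ k ∈ msupp μ := by
    intro k hk
    obtain ⟨n, rfl⟩ := Int.eq_ofNat_of_zero_le (le_trans zero_le_one hk)
    have hn : 1 ≤ n := by exact_mod_cast hk
    clear hk
    induction n with
    | zero => omega
    | succ n ih =>
      rcases Nat.lt_or_ge 1 (n+1) with h | h
      · have hn' : 1 ≤ n := by omega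
        have h2 := msupp_mul μ hid (ih hn') hx
        have h3 : x ^ ((n + 1 : ℕ) : ℤ) = x ^ (n : ℤ) * x := by
          push_cast
          exact zpow_add_one x (n : ℤ)
        rw [h3]
        exact h2
      · have : n = 0 := by omega
        subst this
        simpa using hx
  -- the tail closures
  set T : ℕ → Set G := fun n => closure {z : G | ∃ k : ℤ, (n : ℤ) + 1 ≤ k ∧ z = x ^ k}
    with hT_def
  have hTsubS : ∀ n, T n ⊆ msupp μ := by
    intro n
    rw [← (isClosed_msupp μ).closure_eq]
    apply closure_mono
    rintro z ⟨k, hk, rfl⟩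
    exact hpow k (by omega)
  have hTcomp : ∀ n, IsCompact (T n) :=
    fun n => IsCompact.of_isClosed_subset (msupp_compact μ hid) isClosed_closure (hTsubS n)
  have hTne : ∀ n, (T n).Nonempty :=
    fun n => ⟨x ^ ((n : ℤ) + 1), subset_closure ⟨(n : ℤ) + 1, le_refl _, rfl⟩⟩
  have hTdir : Directed (fun x1 x2 : Set G => x1 ⊇ x2) T := by
    intro i j
    refine ⟨max i j, closure_mono ?_, closure_mono ?_⟩ <;>
      · rintro z ⟨k, hk, rfl⟩
        refine ⟨k, ?_, rfl⟩
        have h1 : ((max i j : ℕ) : ℤ) + 1 ≤ k := hk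
        have h2 : (i : ℤ) ≤ ((max i j : ℕ) : ℤ) := by exact_mod_cast le_max_left i j
        have h3 : (j : ℤ) ≤ ((max i j : ℕ) : ℤ) := by exact_mod_cast le_max_right i j
        omega
  obtain ⟨y, hy⟩ := IsCompact.nonempty_iInter_of_directed_nonempty_isCompact_isClosed
    T hTdir hTne hTcomp (fun n => isClosed_closure)
  simp only [mem_iInter] at hy
  -- x⁻¹ lies in the closure of the set of positive powers of x
  have hmain : x⁻¹ ∈ T 0 := by
    rw [hT_def]
    rw [mem_closure_iff]
    intro W hW hxW
    set φ : G × G → G := fun p => x⁻¹ * p.1 * p.2⁻¹ with hφ_def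
    have hφcont : Continuous φ := by fun_prop
    have hφyy : φ (y, y) = x⁻¹ := by simp [hφ_def, mul_assoc]
    obtain ⟨V₁, V₂, hV₁, hV₂, hyV₁, hyV₂, hVsub⟩ :=
      isOpen_prod_iff.1 (hW.preimage hφcont) y y (by rw [mem_preimage, hφyy]; exact hxW)
    -- a : from y ∈ T 0
    obtain ⟨za, hzaV, a, ha1, rfl⟩ := mem_closure_iff.1 (hy 0) (V₁ ∩ V₂)
      (hV₁.inter hV₂) ⟨hyV₁, hyV₂⟩
    have ha1' : 1 ≤ a := by omega
    -- b : from y ∈ T (a.toNat + 1)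
    obtain ⟨zb, hzbV, b, hb1, rfl⟩ := mem_closure_iff.1 (hy (a.toNat + 1)) (V₁ ∩ V₂)
      (hV₁.inter hV₂) ⟨hyV₁, hyV₂⟩
    have hb2 : a + 2 ≤ b := by
      have : ((a.toNat + 1 : ℕ) : ℤ) + 1 ≤ b := hb1
      omega
    refine ⟨φ (x ^ b, x ^ a), hVsub (Set.mk_mem_prod hzbV.1 hzaV.2), b - 1 - a, by omega, ?_⟩
    rw [hφ_def]
    simp only
    rw [← zpow_neg_one x, ← zpow_neg, ← zpow_add, ← zpow_add]
    congr 1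
    omega
  exact hTsubS 0 hmain

lemma msupp_one (hid : Measure.map (fun p : G × G => p.1 * p.2) (μ.prod μ) = μ)
    (hne : (msupp μ).Nonempty) : (1 : G) ∈ msupp μ := by
  obtain ⟨x, hx⟩ := hne
  have := msupp_mul μ hid hx (msupp_inv μ hid hx)
  simpa using this

lemma measure_inter_msupp (A : Set G) : μ (A ∩ msupp μ) = μ A := by
  rw [← Set.diff_compl]
  exact measure_diff_null (measure_compl_msupp μ)

lemma invariant_compacts (hid : Measure.map (fun p : G × G => p.1 * p.2) (μ.prod μ) = μ)
    {K : Set G} (hK : IsCompact K) (hKS : K ⊆ msupp μ) {s : G} (hs : s ∈ msupp μ) :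
    μ {y | s * y ∈ K} = μ K := by
  set m := ⨆ s : G, μ {y | s * y ∈ K} with hm_def
  have hKm : μ K = μ {y | (1:G) * y ∈ K} := by congr 1; ext y; simp
  rcases eq_or_ne m 0 with h0 | h0
  · have h1 : μ {y | s * y ∈ K} = 0 :=
      le_antisymm (h0 ▸ le_iSup (fun s : G => μ {y | s * y ∈ K}) s) (zero_le)
    have h2 : μ K = 0 := by
      rw [hKm]
      exact le_antisymm (h0 ▸ le_iSup (fun s : G => μ {y | s * y ∈ K}) 1) (zero_le)
    rw [h1, h2]
  · obtain ⟨s₀, hs₀⟩ := exists_max μ hK (pos_iff_ne_zero.2 h0)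
    have hall := eq_max_on_supp μ hid hK hs₀
    have hmpos : 0 < μ ({y | s₀ * y ∈ K} ∩ msupp μ) := by
      rw [measure_inter_msupp, hs₀]
      exact pos_iff_ne_zero.2 h0
    obtain ⟨y, hyB, hyS⟩ := nonempty_of_measure_ne_zero hmpos.ne'
    have hs₀S : s₀ ∈ msupp μ := by
      have h1 : (s₀ * y) * y⁻¹ ∈ msupp μ :=
        msupp_mul μ hid (hKS hyB) (msupp_inv μ hid hyS)
      simpa [mul_assoc] using h1
    have h1 : μ K = m := by
      have := hall s₀⁻¹ (msupp_inv μ hid hs₀S)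
      rw [mul_inv_cancel] at this
      rw [hKm]
      exact this
    have h2 : μ {y | s * y ∈ K} = m := by
      have := hall (s₀⁻¹ * s) (msupp_mul μ hid (msupp_inv μ hid hs₀S) hs)
      rw [show s₀ * (s₀⁻¹ * s) = s by group] at this
      exact this
    rw [h1, h2]

lemma invariant (hid : Measure.map (fun p : G × G => p.1 * p.2) (μ.prod μ) = μ)
    {s : G} (hs : s ∈ msupp μ) {B : Set G} (hB : MeasurableSet B) :
    μ ((fun y => s * y) ⁻¹' B) = μ B := by
  have hSm : MeasurableSet (msupp μ) := (isClosed_msupp μ).measurableSet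
  have dir1 : μ (B ∩ msupp μ) ≤ μ ((fun y => s * y) ⁻¹' B) := by
    refine le_of_forall_lt fun r hr => ?_
    obtain ⟨K, hKsub, hKcomp, hKr⟩ :=
      Measure.InnerRegular.innerRegular (μ := μ) (hB.inter hSm) r hr
    have heq : μ {y | s * y ∈ K} = μ K :=
      invariant_compacts μ hid hKcomp (hKsub.trans inter_subset_right) hs
    refine lt_of_lt_of_le hKr ?_
    rw [← heq]
    exact measure_mono fun y hy => (hKsub hy).1
  have dir2 : μ ((fun y => s * y) ⁻¹' B ∩ msupp μ) ≤ μ B := by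
    refine le_of_forall_lt fun r hr => ?_
    obtain ⟨K, hKsub, hKcomp, hKr⟩ := Measure.InnerRegular.innerRegular (μ := μ)
      ((hB.preimage (measurable_const_mul s)).inter hSm) r hr
    have hK'comp : IsCompact ((fun y => s * y) '' K) :=
      hKcomp.image (continuous_const.mul continuous_id)
    have hK'S : (fun y => s * y) '' K ⊆ msupp μ := by
      rintro _ ⟨y, hy, rfl⟩
      exact msupp_mul μ hid hs (hKsub hy).2
    have h1 : μ {y | s * y ∈ (fun y => s * y) '' K} = μ ((fun y => s * y) '' K) :=
      invariant_compacts μ hid hK'comp hK'S hs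
    have h2 : {y | s * y ∈ (fun y => s * y) '' K} = K := by
      ext y
      simp only [mem_setOf_eq, mem_image]
      constructor
      · rintro ⟨y', hy', hyy⟩
        have : y' = y := mul_left_cancel hyy
        rwa [← this]
      · intro hy; exact ⟨y, hy, rfl⟩
    refine lt_of_lt_of_le hKr ?_
    calc μ K = μ ((fun y => s * y) '' K) := by rw [← h1, h2]
      _ ≤ μ B := measure_mono (by rintro _ ⟨y, hy, rfl⟩; exact (hKsub hy).1)
  refine le_antisymm ?_ ?_
  · calc μ ((fun y => s * y) ⁻¹' B) = μ ((fun y => s * y) ⁻¹' B ∩ msupp μ) :=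
          (measure_inter_msupp μ _).symm
      _ ≤ μ B := dir2
  · calc μ B = μ (B ∩ msupp μ) := (measure_inter_msupp μ _).symm
      _ ≤ μ ((fun y => s * y) ⁻¹' B) := dir1

end Group

section Ext

variable {X : Type*} [TopologicalSpace X] [CompactSpace X] [T2Space X]
  [MeasurableSpace X] [BorelSpace X]

lemma le_on_compacts (μ ν : Measure X) [IsProbabilityMeasure μ] [IsProbabilityMeasure ν]
    [ν.InnerRegular]
    (h : ∀ f : X → ℝ, Continuous f → ∫ x, f x ∂μ = ∫ x, f x ∂ν)
    {K : Set X} (hK : IsCompact K) : μ K ≤ ν K := by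
  refine ENNReal.le_of_forall_pos_le_add fun ε hε _ => ?_
  -- find a compact C ⊆ Kᶜ with ν Kᶜ ≤ ν C + ε
  obtain ⟨C, hCsub, hCcomp, hCν⟩ :
      ∃ C ⊆ Kᶜ, IsCompact C ∧ ν Kᶜ ≤ ν C + ε := by
    by_cases hν : ν Kᶜ ≤ ε
    · exact ⟨∅, empty_subset _, isCompact_empty, by simpa using hν⟩
    · push_neg at hν
      have hr : ν Kᶜ - ε < ν Kᶜ :=
        ENNReal.sub_lt_self (measure_ne_top _ _)
          (pos_of_gt hν).ne' (by exact_mod_cast hε.ne')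
      obtain ⟨C, hCsub, hCcomp, hCr⟩ :=
        Measure.InnerRegular.innerRegular (μ := ν) hK.measurableSet.compl _ hr
      exact ⟨C, hCsub, hCcomp, tsub_le_iff_right.1 hCr.le⟩
  -- Urysohn function
  obtain ⟨f, hf1, hf0, hfsupp, hficc⟩ :=
    exists_continuous_one_zero_of_isCompact hK hCcomp.isClosed
      (Set.disjoint_left.2 fun x hxK hxC => hCsub hxC hxK)
  have hfint_μ : Integrable f μ := f.continuous.integrable_of_hasCompactSupport hfsupp
  have hfint_ν : Integrable f ν := f.continuous.integrable_of_hasCompactSupport hfsupp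
  have hlow : (μ K).toReal ≤ ∫ x, f x ∂μ := by
    have h1 : ∫ x, Set.indicator K (fun _ => (1:ℝ)) x ∂μ ≤ ∫ x, f x ∂μ := by
      refine integral_mono ((integrable_const (1:ℝ)).indicator hK.measurableSet) hfint_μ ?_
      intro x
      by_cases hx : x ∈ K
      · rw [Set.indicator_of_mem hx]
        exact le_of_eq (hf1 hx).symm
      · rw [Set.indicator_of_notMem hx]
        exact (hficc x).1
    rwa [integral_indicator_const (1:ℝ) hK.measurableSet, smul_eq_mul, mul_one] at h1
  have hhigh : ∫ x, f x ∂ν ≤ (ν Cᶜ).toReal := by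
    have h1 : ∫ x, f x ∂ν ≤ ∫ x, Set.indicator Cᶜ (fun _ => (1:ℝ)) x ∂ν := by
      refine integral_mono hfint_ν ((integrable_const (1:ℝ)).indicator
        hCcomp.isClosed.measurableSet.compl) ?_
      intro x
      by_cases hx : x ∈ C
      · rw [Set.indicator_of_notMem (by simpa using hx)]
        exact le_of_eq (hf0 hx)
      · rw [Set.indicator_of_mem (by simpa using hx)]
        exact (hficc x).2
    rwa [integral_indicator_const (1:ℝ) hCcomp.isClosed.measurableSet.compl,
      smul_eq_mul, mul_one] at h1
  have hμν : μ K ≤ ν Cᶜ := by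
    have := le_trans hlow (le_of_eq (h f f.continuous))
    have h2 : (μ K).toReal ≤ (ν Cᶜ).toReal := le_trans this hhigh
    exact (ENNReal.toReal_le_toReal (measure_ne_top _ _) (measure_ne_top _ _)).1 h2
  refine le_trans hμν ?_
  have h3 : ν Cᶜ = 1 - ν C := prob_compl_eq_one_sub hCcomp.isClosed.measurableSet
  rw [h3, tsub_le_iff_right]
  calc (1 : ℝ≥0∞) = ν K + ν Kᶜ := by
        rw [measure_add_measure_compl hK.measurableSet, measure_univ]
    _ ≤ ν K + (ν C + ε) := add_le_add_right hCν _
    _ = ν K + ↑ε + ν C := by ring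

lemma ext_innerRegular (μ ν : Measure X) [IsProbabilityMeasure μ] [IsProbabilityMeasure ν]
    [μ.InnerRegular] [ν.InnerRegular]
    (h : ∀ f : X → ℝ, Continuous f → ∫ x, f x ∂μ = ∫ x, f x ∂ν) : μ = ν := by
  have h' : ∀ f : X → ℝ, Continuous f → ∫ x, f x ∂ν = ∫ x, f x ∂μ :=
    fun f hf => (h f hf).symm
  ext B hB
  refine le_antisymm ?_ ?_
  · refine le_of_forall_lt fun r hr => ?_
    obtain ⟨K, hKsub, hKcomp, hKr⟩ := Measure.InnerRegular.innerRegular (μ := μ) hB r hr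
    exact lt_of_lt_of_le hKr (le_trans (le_on_compacts μ ν h hKcomp)
      (measure_mono hKsub))
  · refine le_of_forall_lt fun r hr => ?_
    obtain ⟨K, hKsub, hKcomp, hKr⟩ := Measure.InnerRegular.innerRegular (μ := ν) hB r hr
    exact lt_of_lt_of_le hKr (le_trans (le_on_compacts ν μ h' hKcomp)
      (measure_mono hKsub))

end Ext

section CompactGroup

variable {H : Type*} [Group H] [TopologicalSpace H] [IsTopologicalGroup H] [CompactSpace H]
  [T2Space H] [MeasurableSpace H] [BorelSpace H]

lemma map_inv_compactGroup (μ : Measure H) [IsProbabilityMeasure μ]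
    [μ.IsMulLeftInvariant] [μ.IsOpenPosMeasure] :
    Measure.map (fun g : H => g⁻¹) μ = μ := by
  have hmap : Measure.map (fun g : H => g⁻¹) μ = μ.inv := rfl
  set ν := μ.inv with hν
  haveI hνprob : IsProbabilityMeasure ν := by
    constructor
    rw [hν, Measure.inv_apply]
    simp
  haveI : ν.IsOpenPosMeasure := by
    refine ⟨fun U hU hUne => ?_⟩
    rw [hν, Measure.inv_apply]
    exact (hU.inv.measure_pos μ hUne.inv).ne'
  haveI : μ.InnerRegular := inferInstance
  haveI : ν.InnerRegular := by
    constructor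
    intro B hB r hr
    rw [hν, Measure.inv_apply] at hr
    obtain ⟨K, hKsub, hKcomp, hKr⟩ :=
      Measure.InnerRegular.innerRegular (μ := μ) hB.inv r hr
    refine ⟨K⁻¹, fun x hx => ?_, hKcomp.inv, ?_⟩
    · have : x⁻¹ ∈ B⁻¹ := hKsub (by simpa using hx)
      simpa using this
    · rw [hν, Measure.inv_apply, inv_inv]
      exact hKr
  have hcs : ∀ f : H → ℝ, HasCompactSupport f := fun f =>
    IsCompact.of_isClosed_subset isCompact_univ (isClosed_tsupport f) (subset_univ _)
  have hint : ∀ f : H → ℝ, Continuous f → ∫ x, f x ∂μ = ∫ x, f x ∂ν := by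
    intro f hf
    have := Measure.integral_isMulLeftInvariant_isMulRightInvariant_combo (μ := μ) (ν := ν)
      hf (hcs f) continuous_const (hcs fun _ => (1:ℝ)) (fun _ => zero_le_one)
      (x₀ := 1) one_ne_zero
    simpa [integral_const, measure_univ] using this
  rw [hmap]
  exact (ext_innerRegular μ ν hint).symm

end CompactGroup

end KawadaItoAux

open KawadaItoAux

/-- An idempotent inner regular Borel probability measure on a locally compact
Hausdorff topological group is invariant under inversion. -/
theorem idempotent_probability_measure_inv_invariant {G : Type*} [Group G]
    [TopologicalSpace G] [IsTopologicalGroup G] [LocallyCompactSpace G] [T2Space G]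
    [MeasurableSpace G] [BorelSpace G]
    (μ : Measure G) [IsProbabilityMeasure μ] [μ.InnerRegular] (hμ : μ ∗ₘ μ = μ) :
    Measure.map (fun g : G => g⁻¹) μ = μ := by
  have hid : Measure.map (fun p : G × G => p.1 * p.2) (μ.prod μ) = μ := hμ
  have hS_closed : IsClosed (msupp μ) := isClosed_msupp μ
  have hS_meas : MeasurableSet (msupp μ) := hS_closed.measurableSet
  have hS_comp : IsCompact (msupp μ) := msupp_compact μ hid
  have hS_ne : (msupp μ).Nonempty := msupp_nonempty μ
  -- the subgroup
  let Γ : Subgroup G :=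
    { carrier := msupp μ
      mul_mem' := fun hx hy => msupp_mul μ hid hx hy
      one_mem' := msupp_one μ hid hS_ne
      inv_mem' := fun hx => msupp_inv μ hid hx }
  haveI : CompactSpace ↥Γ := isCompact_iff_compactSpace.mp hS_comp
  haveI : BorelSpace ↥Γ := Subtype.borelSpace (msupp μ)
  have hemb : MeasurableEmbedding ((↑) : ↥Γ → G) := MeasurableEmbedding.subtype_coe hS_meas
  set μ' : Measure ↥Γ := Measure.comap Subtype.val μ with hμ'_def
  have hcomap : ∀ B : Set ↥Γ, μ' B = μ (Subtype.val '' B) := fun B => hemb.comap_apply μ B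
  haveI : IsProbabilityMeasure μ' := by
    constructor
    rw [hcomap, image_univ, Subtype.range_coe]
    have := measure_inter_msupp μ univ
    rwa [univ_inter, measure_univ] at this
  haveI : μ'.IsMulLeftInvariant := by
    constructor
    intro g
    ext B hB
    rw [Measure.map_apply (measurable_const_mul g) hB, hcomap, hcomap]
    have hset : Subtype.val '' ((fun h : ↥Γ => g * h) ⁻¹' B) =
        (fun x : G => (↑g : G) * x) ⁻¹' (Subtype.val '' B) ∩ msupp μ := by
      ext x
      constructor
      · rintro ⟨h, hh, rfl⟩
        exact ⟨⟨g * h, hh, rfl⟩, h.2⟩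
      · rintro ⟨⟨b, hb, hbx⟩, hxS⟩
        refine ⟨⟨x, hxS⟩, ?_, rfl⟩
        have hgb : (g * (⟨x, hxS⟩ : ↥Γ)) = b := Subtype.ext (by simp [hbx])
        show g * (⟨x, hxS⟩ : ↥Γ) ∈ B
        rw [hgb]
        exact hb
    rw [hset, measure_inter_msupp μ]
    exact invariant μ hid g.2 (hemb.measurableSet_image' hB)
  haveI : μ'.IsOpenPosMeasure := by
    refine ⟨fun U hU hUne => ?_⟩
    obtain ⟨V, hV, hVU⟩ := isOpen_induced_iff.1 hU
    obtain ⟨x, hx⟩ := hUne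
    rw [hcomap]
    have himg : Subtype.val '' U = V ∩ msupp μ := by
      rw [← hVU]
      ext z
      constructor
      · rintro ⟨w, hw, rfl⟩
        exact ⟨hw, w.2⟩
      · rintro ⟨hzV, hzS⟩
        exact ⟨⟨z, hzS⟩, hzV, rfl⟩
    rw [himg, measure_inter_msupp μ]
    have hxV : (x : G) ∈ V := by rw [← hVU] at hx; exact hx
    exact (x.2 V hV hxV).ne'
  have hinv' : Measure.map (fun h : ↥Γ => h⁻¹) μ' = μ' := map_inv_compactGroup μ'
  have hrestrict : Measure.map Subtype.val μ' = μ := by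
    rw [hμ'_def, hemb.map_comap, Subtype.range_coe]
    refine Measure.restrict_eq_self_of_ae_mem ?_
    rw [Filter.Eventually, mem_ae_iff]
    exact measure_compl_msupp μ
  calc Measure.map (fun g : G => g⁻¹) μ
      = Measure.map (fun g : G => g⁻¹) (Measure.map Subtype.val μ') := by rw [hrestrict]
    _ = Measure.map ((fun g : G => g⁻¹) ∘ Subtype.val) μ' :=
        Measure.map_map (measurable_inv : Measurable fun g : G => g⁻¹) measurable_subtype_coe
    _ = Measure.map (Subtype.val ∘ (fun h : ↥Γ => h⁻¹)) μ' := by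
        congr 1
    _ = Measure.map Subtype.val (Measure.map (fun h : ↥Γ => h⁻¹) μ') :=
        (Measure.map_map measurable_subtype_coe
          (continuous_inv.measurable : Measurable fun h : ↥Γ => h⁻¹)).symm
    _ = Measure.map Subtype.val μ' := by rw [hinv']
    _ = μ := hrestrict
end
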